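/- arXiv:2307.03036 — 2 statements merged into one kernel-verified Lean document; each statement's English description precedes it below -/
import Mathlib

section
/- Assume ν ≤ 1. Let i ∈ {1,…,d} and β, γ ∈ M(coord) with (∂_i)^{sc}_β^γ ≠ 0. Then: if γ ∈ N_min then β ∈ N_min; if γ ∈ P then β ∈ P; and if γ ∈ N then β ∈ N. -/
open scoped Classical

noncomputable section

/-- The set of `d`-tuples of natural numbers, `ℕ^d`. -/
abbrev Nd (d : ℕ) : Type := Fin d → ℕ

/-- Multi-indices over `ℕ^d`: finitely supported functions `ℕ^d → ℕ`. -/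
abbrev MNd (d : ℕ) : Type := Nd d →₀ ℕ

/-- The coordinate set `coord = (𝔏 × M(ℕ^d)) ⊔ ℕ^d`, where `𝔏 = 𝔏⁻ ∪ {0}` is
modelled as `Option Lm` (with `none` playing the role of the element `0`). -/
abbrev Coord (Lm : Type) (d : ℕ) : Type := (Option Lm × MNd d) ⊕ Nd d

/-- Multi-indices over `coord`. -/
abbrev MCoord (Lm : Type) (d : ℕ) : Type := Coord Lm d →₀ ℕ

variable {Lm : Type} {d : ℕ}

/-- Length `ℓ(m)` of a multi-index. -/
def mlen {I : Type} (m : I →₀ ℕ) : ℕ := m.sum fun _ v => v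

/-- The `i`-th unit vector of `ℕ^d`. -/
def unitNd (i : Fin d) : Nd d := Pi.single i 1

/-- The coefficient `(z^{γ'} D^{(n')})_β^γ`. -/
def coefZD (γ' : MCoord Lm d) (n' : Nd d) (β γ : MCoord Lm d) : ℝ :=
  (γ.sum fun x v =>
    match x with
    | Sum.inl (l, k) =>
        (v : ℝ) * ((k n' : ℝ) + 1) *
          (if β + Finsupp.single (Sum.inl (l, k)) 1 =
              γ + Finsupp.single (Sum.inl (l, k + Finsupp.single n' 1)) 1 + γ'
           then 1 else 0)
    | Sum.inr _ => 0) +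
  ((γ (Sum.inr n') : ℝ) *
    (if β + Finsupp.single (Sum.inr n') 1 = γ + γ' then 1 else 0))

/-- The coefficient `(D^{(n')})_β^γ`. -/
def coefD (n' : Nd d) (β γ : MCoord Lm d) : ℝ := coefZD 0 n' β γ

/-- The coefficient `(∂_i)_β^γ`. -/
def coefPartial (i : Fin d) (β γ : MCoord Lm d) : ℝ :=
  ∑ᶠ n : Nd d,
    ((n i : ℝ) + 1) * coefZD (Finsupp.single (Sum.inr (n + unitNd i)) 1) n β γ

/-- `[β]`. -/
def brkt (β : MCoord Lm d) : ℤ :=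
  β.sum fun x v =>
    match x with
    | Sum.inl (_, k) => (1 - (mlen k : ℤ)) * (v : ℤ)
    | Sum.inr _ => (v : ℤ)

/-- Noise homogeneity `⟦β⟧`. -/
def nh (β : MCoord Lm d) : ℕ :=
  β.sum fun x v =>
    match x with
    | Sum.inl (some _, _) => v
    | Sum.inl (none, _) => 0
    | Sum.inr _ => 0

/-- Scaled degree `|n|` of `n ∈ ℕ^d`. -/
def snorm (s : Fin d → ℝ) (n : Nd d) : ℝ := ∑ i, s i * (n i : ℝ)

/-- A subcritical pair `(l,k)`. -/
def Subcritical {L : Type} (s : Fin d → ℝ) (η : ℝ) (reg : L → ℝ) (ν : ℝ)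
    (l : L) (k : MNd d) : Prop :=
  ν < η + reg l ∧
  ∀ k' : MNd d, 0 < k' → k' ≤ k →
    ν < η + (k'.sum fun n v => (ν - snorm s n) * (v : ℝ)) ∧
    ν < η + reg l + (k'.sum fun n v => (ν - snorm s n) * (v : ℝ))

/-- A subcritical multi-index. -/
def SubcriticalM (s : Fin d → ℝ) (η : ℝ) (reg : Option Lm → ℝ) (ν : ℝ)
    (β : MCoord Lm d) : Prop :=
  ∀ (l : Option Lm) (k : MNd d), β (Sum.inl (l, k)) ≠ 0 → Subcritical s η reg ν l k

/-- Homogeneity `|β|`. -/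
def homg (s : Fin d → ℝ) (η : ℝ) (α : Option Lm → ℝ) (β : MCoord Lm d) : ℝ :=
  β.sum fun x v =>
    match x with
    | Sum.inl (l, k) =>
        (α l + k.sum fun n v' => (η - snorm s n) * (v' : ℝ)) * (v : ℝ)
    | Sum.inr n => (snorm s n - η) * (v : ℝ)

/-- The set `N_min`. -/
def Nmin (s : Fin d → ℝ) (η : ℝ) (reg : Option Lm → ℝ) (ν : ℝ) :
    Set (MCoord Lm d) :=
  {β | brkt β = 1 ∧ SubcriticalM s η reg ν β ∧
       ∀ n : Nd d, snorm s n < ν → β (Sum.inr n) = 0}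

/-- The set `N`. -/
def NSet (s : Fin d → ℝ) (η : ℝ) (reg : Option Lm → ℝ) (ν : ℝ) :
    Set (MCoord Lm d) :=
  {β | β ∈ Nmin s η reg ν ∧ 0 < nh β}

/-- The purely polynomial set `P = {e_n}`. -/
def PolySet : Set (MCoord Lm d) :=
  {β | ∃ n : Nd d, β = Finsupp.single (Sum.inr n) 1}

/-- `populated = P ∪ N`. -/
def Populated (s : Fin d → ℝ) (η : ℝ) (reg : Option Lm → ℝ) (ν : ℝ) :
    Set (MCoord Lm d) :=
  PolySet ∪ NSet s η reg ν

/-- The subcritical coefficient `(z^{γ'} D^{(n')})^{sc}_β^γ`. -/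
def coefZDsc (s : Fin d → ℝ) (η : ℝ) (reg : Option Lm → ℝ) (ν : ℝ)
    (γ' : MCoord Lm d) (n' : Nd d) (β γ : MCoord Lm d) : ℝ :=
  (γ.sum fun x v =>
    match x with
    | Sum.inl (l, k) =>
        if Subcritical s η reg ν l (k + Finsupp.single n' 1) then
          (v : ℝ) * ((k n' : ℝ) + 1) *
            (if β + Finsupp.single (Sum.inl (l, k)) 1 =
                γ + Finsupp.single (Sum.inl (l, k + Finsupp.single n' 1)) 1 + γ'
             then 1 else 0)
        else 0
    | Sum.inr _ => 0) +
  ((γ (Sum.inr n') : ℝ) *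
    (if β + Finsupp.single (Sum.inr n') 1 = γ + γ' then 1 else 0))

/-- The subcritical coefficient `(∂_i)^{sc}_β^γ`. -/
def coefPartialSc (s : Fin d → ℝ) (η : ℝ) (reg : Option Lm → ℝ) (ν : ℝ)
    (i : Fin d) (β γ : MCoord Lm d) : ℝ :=
  ∑ᶠ n : Nd d,
    ((n i : ℝ) + 1) *
      coefZDsc s η reg ν (Finsupp.single (Sum.inr (n + unitNd i)) 1) n β γ

/-- `⌊β⌋ := Σ_n |n|·β(n)`. -/
def polydeg (s : Fin d → ℝ) (β : MCoord Lm d) : ℝ :=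
  β.sum fun x v =>
    match x with
    | Sum.inl _ => 0
    | Sum.inr n => snorm s n * (v : ℝ)

/-- `Σ_n (|n| − ν)·β(n)`. -/
def polyexcess (s : Fin d → ℝ) (ν : ℝ) (β : MCoord Lm d) : ℝ :=
  β.sum fun x v =>
    match x with
    | Sum.inl _ => 0
    | Sum.inr n => (snorm s n - ν) * (v : ℝ)

/-- `|β|_≺ := λ₁·ℓ(β) + λ₂·⟦β⟧ + λ₃·⌊β⌋`. -/
def ordPrec (s : Fin d → ℝ) (lam1 lam2 lam3 : ℝ) (β : MCoord Lm d) : ℝ :=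
  lam1 * (mlen β : ℝ) + lam2 * (nh β : ℝ) + lam3 * polydeg s β

/-!
A nonzero coefficient `(∂_i)^{sc}_β^γ` forces one of two exchange identities: either
`β + e_{(l,k)} = γ + e_{(l,k+e_n)} + e_{n+e_i}` with `(l, k+e_n)` subcritical, or
`β + e_n = γ + e_{n+e_i}`. In both, the exchanged pieces carry the same `[·]` and `⟦·⟧`,
and every coordinate added on the right is subcritical or polynomial of degree
`|n+e_i| ≥ s_i ≥ 1 ≥ ν`; since `β` is dominated by `γ` plus these pieces, membership in
`N_min` and `N` passes from `γ` to `β`. For `P`, only the second identity is compatible with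
`γ = e_m`, and it forces `m = n` and `β = e_{n+e_i}`.
-/

lemma brkt_add (a b : MCoord Lm d) : brkt (a + b) = brkt a + brkt b := by
  unfold brkt
  refine Finsupp.sum_add_index' ?_ ?_
  · rintro (⟨l, k⟩ | n) <;> simp
  · rintro (⟨l, k⟩ | n) v w <;> push_cast <;> ring

lemma brkt_single_inl (l : Option Lm) (k : MNd d) :
    brkt (Finsupp.single (Sum.inl (l, k)) 1 : MCoord Lm d) = 1 - (mlen k : ℤ) := by
  simp [brkt, Finsupp.sum_single_index]

lemma brkt_single_inr (n : Nd d) :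
    brkt (Finsupp.single (Sum.inr n) 1 : MCoord Lm d) = 1 := by
  simp [brkt, Finsupp.sum_single_index]

lemma mlen_add {I : Type} (a b : I →₀ ℕ) : mlen (a + b) = mlen a + mlen b :=
  Finsupp.sum_add_index' (fun _ => rfl) fun _ _ _ => rfl

lemma mlen_single {I : Type} (x : I) (v : ℕ) : mlen (Finsupp.single x v) = v :=
  Finsupp.sum_single_index rfl

lemma nh_add (a b : MCoord Lm d) : nh (a + b) = nh a + nh b := by
  unfold nh
  refine Finsupp.sum_add_index' ?_ ?_
  · rintro (⟨(l | l), k⟩ | n) <;> simp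
  · rintro (⟨(l | l), k⟩ | n) v w <;> simp

lemma nh_single_inl_congr (l : Option Lm) (k k' : MNd d) :
    nh (Finsupp.single (Sum.inl (l, k)) 1 : MCoord Lm d) =
      nh (Finsupp.single (Sum.inl (l, k')) 1 : MCoord Lm d) := by
  cases l <;> simp [nh, Finsupp.sum_single_index]

lemma nh_single_inr (n : Nd d) :
    nh (Finsupp.single (Sum.inr n) 1 : MCoord Lm d) = 0 := by
  simp [nh, Finsupp.sum_single_index]

lemma snorm_add (s : Fin d → ℝ) (n m : Nd d) :
    snorm s (n + m) = snorm s n + snorm s m := by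
  simp only [snorm, Pi.add_apply, Nat.cast_add, mul_add, Finset.sum_add_distrib]

lemma snorm_unitNd (s : Fin d → ℝ) (i : Fin d) : snorm s (unitNd i) = s i := by
  simp [snorm, unitNd, Pi.single_apply]

lemma snorm_nonneg {s : Fin d → ℝ} (hs : ∀ i, 0 ≤ s i) (n : Nd d) : 0 ≤ snorm s n :=
  Finset.sum_nonneg fun j _ => mul_nonneg (hs j) (Nat.cast_nonneg _)

lemma le_snorm_add_unitNd {s : Fin d → ℝ} (hs : ∀ i, 1 ≤ s i) {ν : ℝ} (hν : ν ≤ 1)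
    (n : Nd d) (i : Fin d) : ν ≤ snorm s (n + unitNd i) := by
  have := snorm_nonneg (fun j => zero_le_one.trans (hs j)) n
  rw [snorm_add, snorm_unitNd]
  linarith [hs i]

section Admissible

variable {s : Fin d → ℝ} {η : ℝ} {reg : Option Lm → ℝ} {ν : ℝ}

/-- The conditions defining `N_min` other than `[β] = 1`. -/
def Admissible (s : Fin d → ℝ) (η : ℝ) (reg : Option Lm → ℝ) (ν : ℝ)
    (β : MCoord Lm d) : Prop :=
  SubcriticalM s η reg ν β ∧ ∀ n : Nd d, snorm s n < ν → β (Sum.inr n) = 0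

lemma Admissible.mono {β γ : MCoord Lm d} (hγ : Admissible s η reg ν γ) (hle : β ≤ γ) :
    Admissible s η reg ν β := by
  refine ⟨fun l k hβ => hγ.1 l k ?_, fun n hn => ?_⟩
  · exact (Nat.pos_of_ne_zero hβ).trans_le (hle _) |>.ne'
  · exact Nat.eq_zero_of_le_zero ((hle _).trans (hγ.2 n hn).le)

lemma Admissible.add {a b : MCoord Lm d} (ha : Admissible s η reg ν a)
    (hb : Admissible s η reg ν b) : Admissible s η reg ν (a + b) := by
  refine ⟨fun l k hab => ?_, fun n hn => by simp [ha.2 n hn, hb.2 n hn]⟩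
  by_cases hak : a (Sum.inl (l, k)) = 0
  · exact hb.1 l k (by simpa [hak] using hab)
  · exact ha.1 l k hak

lemma admissible_single_inl {l : Option Lm} {k : MNd d} (h : Subcritical s η reg ν l k) :
    Admissible s η reg ν (Finsupp.single (Sum.inl (l, k)) 1) := by
  refine ⟨fun l' k' hne => ?_, fun n _ => by simp⟩
  obtain ⟨rfl, rfl⟩ : l = l' ∧ k = k' := by
    simpa [Finsupp.single_apply] using hne
  exact h

lemma admissible_single_inr {n : Nd d} (h : ν ≤ snorm s n) :
    Admissible s η reg ν (Finsupp.single (Sum.inr n) 1 : MCoord Lm d) := by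
  refine ⟨fun l k hne => by simp at hne, fun m hm => ?_⟩
  have : n ≠ m := by rintro rfl; linarith
  simp [this]

lemma mem_Nmin_and_mem_NSet_of_add_eq {β γ a c : MCoord Lm d} (heq : β + a = γ + c)
    (hbrkt : brkt a = brkt c) (hnh : nh a = nh c) (hc : Admissible s η reg ν c) :
    (γ ∈ Nmin s η reg ν → β ∈ Nmin s η reg ν) ∧
    (γ ∈ NSet s η reg ν → β ∈ NSet s η reg ν) := by
  have hβ_brkt : brkt β = brkt γ := by
    have := congrArg brkt heq
    rw [brkt_add, brkt_add] at this
    linarith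
  have hβ_nh : nh β = nh γ := by
    have := congrArg nh heq
    rw [nh_add, nh_add] at this
    omega
  have hNmin : γ ∈ Nmin s η reg ν → β ∈ Nmin s η reg ν := by
    rintro ⟨hγ_brkt, hγ⟩
    exact ⟨hβ_brkt.trans hγ_brkt, (Admissible.add hγ hc).mono (heq ▸ le_self_add)⟩
  exact ⟨hNmin, fun ⟨hγ, hγ_nh⟩ => ⟨hNmin hγ, hβ_nh ▸ hγ_nh⟩⟩

end Admissible

lemma eq_single_of_add_single_eq {X : Type} {β : X →₀ ℕ} {x y z : X} (hzx : z ≠ x)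
    (h : β + Finsupp.single x 1 = Finsupp.single y 1 + Finsupp.single z 1) :
    β = Finsupp.single z 1 := by
  obtain rfl : y = x := by
    by_contra hyx
    simpa [Finsupp.single_apply, hyx, hzx] using DFunLike.congr_fun h x
  exact add_right_cancel (h.trans (add_comm _ _))

lemma exists_coefZDsc_ne_zero {s : Fin d → ℝ} {η : ℝ} {reg : Option Lm → ℝ} {ν : ℝ}
    {i : Fin d} {β γ : MCoord Lm d} (h : coefPartialSc s η reg ν i β γ ≠ 0) :
    ∃ n : Nd d,
      coefZDsc s η reg ν (Finsupp.single (Sum.inr (n + unitNd i)) 1) n β γ ≠ 0 := by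
  by_contra! hzero
  exact h (finsum_eq_zero_of_forall_eq_zero fun n => by rw [hzero n, mul_zero])

lemma coefZDsc_ne_zero_cases {s : Fin d → ℝ} {η : ℝ} {reg : Option Lm → ℝ} {ν : ℝ}
    {γ' : MCoord Lm d} {n' : Nd d} {β γ : MCoord Lm d}
    (h : coefZDsc s η reg ν γ' n' β γ ≠ 0) :
    (∃ (l : Option Lm) (k : MNd d), Subcritical s η reg ν l (k + Finsupp.single n' 1) ∧
      β + Finsupp.single (Sum.inl (l, k)) 1 =
        γ + Finsupp.single (Sum.inl (l, k + Finsupp.single n' 1)) 1 + γ') ∨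
    β + Finsupp.single (Sum.inr n') 1 = γ + γ' := by
  unfold coefZDsc at h
  by_cases hpoly : β + Finsupp.single (Sum.inr n') 1 = γ + γ'
  · exact Or.inr hpoly
  rw [if_neg hpoly, mul_zero, add_zero, Finsupp.sum] at h
  obtain ⟨⟨l, k⟩ | m, -, hx⟩ := Finset.exists_ne_zero_of_sum_ne_zero h
  · refine Or.inl ⟨l, k, ?_⟩
    simp only at hx
    split_ifs at hx with hsc heq
    · exact ⟨hsc, heq⟩
    all_goals simp at hx
  · simp at hx

theorem stmt12_general {Lm : Type} {d : ℕ}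
    (s : Fin d → ℝ) (hs : ∀ i, 1 ≤ s i) (η : ℝ) (reg : Option Lm → ℝ) (ν : ℝ)
    (hν : ν ≤ 1) (i : Fin d) (β γ : MCoord Lm d)
    (h : coefPartialSc s η reg ν i β γ ≠ 0) :
    (γ ∈ Nmin s η reg ν → β ∈ Nmin s η reg ν) ∧
    (γ ∈ PolySet → β ∈ PolySet) ∧
    (γ ∈ NSet s η reg ν → β ∈ NSet s η reg ν) := by
  obtain ⟨n, hn⟩ := exists_coefZDsc_ne_zero h
  have hpoly :
      Admissible s η reg ν (Finsupp.single (Sum.inr (n + unitNd i)) 1 : MCoord Lm d) :=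
    admissible_single_inr (le_snorm_add_unitNd hs hν n i)
  have hni : n + unitNd i ≠ n := fun hself => by
    simpa [unitNd] using congrFun hself i
  rcases coefZDsc_ne_zero_cases hn with ⟨l, k, hsc, heq⟩ | heq
  · rw [add_assoc] at heq
    obtain ⟨hNmin, hN⟩ := mem_Nmin_and_mem_NSet_of_add_eq heq
      (by
        simp only [brkt_add, brkt_single_inl, brkt_single_inr, mlen_add, mlen_single]
        push_cast
        ring)
      (by rw [nh_add, nh_single_inr, add_zero, nh_single_inl_congr l k])
      ((admissible_single_inl hsc).add hpoly)
    refine ⟨hNmin, ?_, hN⟩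
    rintro ⟨m, rfl⟩
    have hk : k + Finsupp.single n 1 ≠ k := fun hself => by
      simpa using DFunLike.congr_fun hself n
    simpa [Finsupp.single_apply, hk.symm] using DFunLike.congr_fun heq (Sum.inl (l, k))
  · obtain ⟨hNmin, hN⟩ := mem_Nmin_and_mem_NSet_of_add_eq heq
      (by rw [brkt_single_inr, brkt_single_inr]) (by rw [nh_single_inr, nh_single_inr]) hpoly
    refine ⟨hNmin, ?_, hN⟩
    rintro ⟨m, rfl⟩
    exact ⟨_, eq_single_of_add_single_eq (by simpa using hni) heq⟩

theorem stmt12 {Lm : Type} [Fintype Lm] {d : ℕ} (hd : 1 ≤ d)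
    (s : Fin d → ℝ) (hs : ∀ i, 1 ≤ s i) (η : ℝ) (reg : Option Lm → ℝ) (ν : ℝ)
    (hν : ν ≤ 1) (i : Fin d) (β γ : MCoord Lm d)
    (h : coefPartialSc s η reg ν i β γ ≠ 0) :
    (γ ∈ Nmin s η reg ν → β ∈ Nmin s η reg ν) ∧
    (γ ∈ PolySet → β ∈ PolySet) ∧
    (γ ∈ NSet s η reg ν → β ∈ NSet s η reg ν) :=
  stmt12_general s hs η reg ν hν i β γ h
end
end

section
/- For every β ∈ M(coord), the set {(γ, γ', n') ∈ M(coord) × N × ℕ^d : |n'| < η + |γ'| and (z^{γ'}D^{(n')})_β^γ ≠ 0} is finite. -/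
/-!
A nonzero coefficient `(z^{γ'} D^{(n')})_β^γ` forces an identity
`β + e_x = γ + δ + γ'` with `γ(x) ≠ 0`: either `x = (l,k)` and `δ = e_{(l, k + e_{n'})}`, or
`x = n'` and `δ = 0`. Since `e_x ≤ γ`, this gives `γ' ≤ β`, so `|γ'|` ranges over finitely many
values and the condition `|n'| < η + |γ'|` confines `n'` to a finite set (as `s_i ≥ 1`).
For fixed `n'` the coordinate `x` is either `n'` or some `(l,k)` with `β(l, k + e_{n'}) ≠ 0`,
finitely many choices, and `γ ≤ β + e_x`.
-/

open scoped Classical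

noncomputable section

variable {Lm : Type} {d : ℕ}

open Finsupp

section MultiIndex

variable {ι : Type*}

theorem Finsupp.le_of_add_single_eq_add {f g δ h : ι →₀ ℕ} {x : ι} (hx : g x ≠ 0)
    (heq : f + single x 1 = g + δ + h) : h ≤ f := by
  have hxg : single x 1 ≤ g := single_le_iff.mpr (Nat.one_le_iff_ne_zero.mpr hx)
  refine le_of_add_le_add_right (a := single x 1) ?_
  calc h + single x 1 ≤ g + δ + h := by
        rw [add_comm h, add_assoc]; exact add_le_add hxg le_add_self
    _ = f + single x 1 := heq.symm

theorem Finsupp.apply_ne_zero_of_add_single_eq {f g h : ι →₀ ℕ} {x y : ι} (hxy : x ≠ y)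
    (heq : f + single x 1 = g + single y 1 + h) : f y ≠ 0 := by
  have hy := DFunLike.congr_fun heq y
  simp only [add_apply, single_eq_same, single_eq_of_ne' hxy] at hy
  omega

end MultiIndex

theorem finite_setOf_snorm_lt {s : Fin d → ℝ} (hs : ∀ i, 1 ≤ s i) (B : ℝ) :
    {n : Nd d | snorm s n < B}.Finite := by
  refine (Set.Finite.pi (t := fun _ => Set.Iic ⌈B⌉₊) fun _ => Set.finite_Iic _).subset ?_
  intro n hn i _
  have hni : (n i : ℝ) ≤ snorm s n :=
    calc (n i : ℝ) ≤ s i * n i := le_mul_of_one_le_left (Nat.cast_nonneg _) (hs i)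
      _ ≤ snorm s n := Finset.single_le_sum (f := fun j => s j * (n j : ℝ))
          (fun j _ => mul_nonneg (zero_le_one.trans (hs j)) (Nat.cast_nonneg _))
          (Finset.mem_univ i)
  exact Nat.cast_le.mp ((hni.trans hn.le).trans (Nat.le_ceil B))

def derivCoords (β : MCoord Lm d) (n' : Nd d) : Set (Coord Lm d) :=
  insert (Sum.inr n')
    (Sum.inl '' {p | β (Sum.inl (p.1, p.2 + single n' 1)) ≠ 0})

theorem finite_derivCoords (β : MCoord Lm d) (n' : Nd d) : (derivCoords β n').Finite := by
  have hsupp : {p : Option Lm × MNd d | β (Sum.inl p) ≠ 0}.Finite :=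
    β.hasFiniteSupport.preimage Sum.inl_injective.injOn
  have hshift : Function.Injective fun p : Option Lm × MNd d => (p.1, p.2 + single n' 1) :=
    fun p q h => by
      simp only [Prod.mk.injEq, add_left_inj] at h
      exact Prod.ext h.1 h.2
  exact ((hsupp.preimage hshift.injOn).image Sum.inl).insert _

theorem exists_of_coefZD_ne_zero {γ' : MCoord Lm d} {n' : Nd d} {β γ : MCoord Lm d}
    (h : coefZD γ' n' β γ ≠ 0) :
    (∃ l k, γ (Sum.inl (l, k)) ≠ 0 ∧ β + single (Sum.inl (l, k)) 1 =
        γ + single (Sum.inl (l, k + single n' 1)) 1 + γ') ∨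
      (γ (Sum.inr n') ≠ 0 ∧ β + single (Sum.inr n') 1 = γ + γ') := by
  by_contra! hcon
  apply h
  rw [coefZD, Finsupp.sum, Finset.sum_eq_zero, zero_add]
  · by_cases hγ : γ (Sum.inr n') = 0
    · simp [hγ]
    · rw [if_neg (hcon.2 hγ), mul_zero]
  · rintro (⟨l, k⟩ | n) hx
    · dsimp only
      rw [if_neg (hcon.1 l k (mem_support_iff.mp hx)), mul_zero]
    · rfl

theorem le_of_coefZD_ne_zero {γ' : MCoord Lm d} {n' : Nd d} {β γ : MCoord Lm d}
    (h : coefZD γ' n' β γ ≠ 0) :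
    γ' ≤ β ∧ ∃ x ∈ derivCoords β n', γ ≤ β + single x 1 := by
  rcases exists_of_coefZD_ne_zero h with ⟨l, k, hγ, heq⟩ | ⟨hγ, heq⟩
  · have hk : (Sum.inl (l, k) : Coord Lm d) ≠ Sum.inl (l, k + single n' 1) := by simp
    refine ⟨le_of_add_single_eq_add hγ heq, _, Or.inr ⟨(l, k), ?_, rfl⟩, ?_⟩
    · exact apply_ne_zero_of_add_single_eq hk heq
    · rw [heq, add_assoc]; exact le_self_add
  · refine ⟨le_of_add_single_eq_add (δ := 0) hγ (by rwa [add_zero]), _, Or.inl rfl, ?_⟩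
    rw [heq]; exact le_self_add

theorem stmt15_general {Lm : Type} {d : ℕ}
    (s : Fin d → ℝ) (hs : ∀ i, 1 ≤ s i) (η : ℝ)
    (α reg : Option Lm → ℝ) (ν : ℝ)
    (β : MCoord Lm d) :
    {p : MCoord Lm d × MCoord Lm d × Nd d |
      p.2.1 ∈ NSet s η reg ν ∧ snorm s p.2.2 < η + homg s η α p.2.1 ∧
      coefZD p.2.1 p.2.2 β p.1 ≠ 0}.Finite := by
  obtain ⟨C, hC⟩ := ((Set.finite_Iic β).image (homg s η α)).bddAbove
  refine ((finite_setOf_snorm_lt hs (η + C)).biUnion fun n' _ =>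
    (finite_derivCoords β n').biUnion fun x _ =>
      (Set.finite_Iic (β + single x 1)).prod
        ((Set.finite_Iic β).prod (Set.finite_singleton n'))).subset ?_
  rintro ⟨γ, γ', n'⟩ ⟨-, hhom, hne⟩
  obtain ⟨hγ', x, hx, hγ⟩ := le_of_coefZD_ne_zero hne
  have hn' : snorm s n' < η + C := hhom.trans_le (by linarith [hC ⟨γ', hγ', rfl⟩])
  simp only [Set.mem_iUnion]
  exact ⟨n', hn', x, hx, hγ, hγ', rfl⟩

theorem stmt15 {Lm : Type} [Fintype Lm] {d : ℕ} (hd : 1 ≤ d)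
    (s : Fin d → ℝ) (hs : ∀ i, 1 ≤ s i) (η : ℝ)
    (α reg : Option Lm → ℝ) (ν : ℝ)
    (β : MCoord Lm d) :
    {p : MCoord Lm d × MCoord Lm d × Nd d |
      p.2.1 ∈ NSet s η reg ν ∧ snorm s p.2.2 < η + homg s η α p.2.1 ∧
      coefZD p.2.1 p.2.2 β p.1 ≠ 0}.Finite :=
  stmt15_general s hs η α reg ν β

end
end
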